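/- Let (γ, ψ, J₊, J₋) define a linear generalized Hermitian structure on W, with associated bivectors π, π' given by π♯ = (1/2)(J₊ − J₋)∘γ♯ and π'♯ = (1/2)(J₊ + J₋)∘γ♯. If V ⊆ W is invariant under both J₊ and J₋ (bicomplex), then V ∩ π♯(ann V) = 0 and V ∩ π'♯(ann V) = 0. -/
import Mathlib


open LinearMap

/-- Let `(γ, ψ, J₊, J₋)` define a linear generalized Hermitian structure on `W`,
with bivectors `π♯ = (1/2)(J₊ - J₋)∘γ♯` and `π'♯ = (1/2)(J₊ + J₋)∘γ♯`.  If
`V ⊆ W` is invariant under both `J₊` and `J₋` (bicomplex), then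
`V ∩ π♯(ann V) = 0` and `V ∩ π'♯(ann V) = 0`. -/
theorem bicomplex_poissonDirac
    (W : Type*) [AddCommGroup W] [Module ℝ W] [FiniteDimensional ℝ W]
    (gamFl : W →ₗ[ℝ] Module.Dual ℝ W) (gamSh : Module.Dual ℝ W →ₗ[ℝ] W)
    (hinv1 : gamSh ∘ₗ gamFl = LinearMap.id) (hinv2 : gamFl ∘ₗ gamSh = LinearMap.id)
    (hgam_symm : ∀ X Y : W, gamFl X Y = gamFl Y X)
    (hgam_pos : ∀ X : W, X ≠ 0 → 0 < gamFl X X)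
    (Jp Jm : W →ₗ[ℝ] W)
    (hJp : Jp ∘ₗ Jp = -LinearMap.id) (hJm : Jm ∘ₗ Jm = -LinearMap.id)
    (hJp_compat : ∀ X Y : W, gamFl (Jp X) (Jp Y) = gamFl X Y)
    (hJm_compat : ∀ X Y : W, gamFl (Jm X) (Jm Y) = gamFl X Y)
    (V : Submodule ℝ W)
    (hVp : Submodule.map Jp V = V) (hVm : Submodule.map Jm V = V) :
    V ⊓ Submodule.map ((1/2 : ℝ) • ((Jp - Jm) ∘ₗ gamSh)) V.dualAnnihilator = ⊥ ∧
    V ⊓ Submodule.map ((1/2 : ℝ) • ((Jp + Jm) ∘ₗ gamSh)) V.dualAnnihilator = ⊥ := by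
  have hJpV : ∀ x, x ∈ V → Jp x ∈ V := by
    intro x hx
    rw [← hVp]; exact Submodule.mem_map_of_mem hx
  have hJmV : ∀ x, x ∈ V → Jm x ∈ V := by
    intro x hx
    rw [← hVm]; exact Submodule.mem_map_of_mem hx
  have hJp2 : ∀ x, Jp (Jp x) = -x := by
    intro x
    have := LinearMap.ext_iff.mp hJp x
    simpa using this
  have hJm2 : ∀ x, Jm (Jm x) = -x := by
    intro x
    have := LinearMap.ext_iff.mp hJm x
    simpa using this
  have key : ∀ (s : ℝ) (x : W), x ∈ V →
      x ∈ Submodule.map ((1/2 : ℝ) • ((Jp + s • Jm) ∘ₗ gamSh)) V.dualAnnihilator →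
      x = 0 := by
    intro s x hxV hxmap
    obtain ⟨ξ, hξ, hξx⟩ := hxmap
    set y := gamSh ξ with hy
    have hfy : gamFl y = ξ := LinearMap.ext_iff.mp hinv2 ξ
    have hyV : ∀ v ∈ V, gamFl y v = 0 := by
      intro v hv
      rw [hfy]
      have hξ' : ξ ∈ V.dualAnnihilator := hξ
      rw [Submodule.mem_dualAnnihilator] at hξ'
      exact hξ' v hv
    have hxeq : x = (1/2 : ℝ) • (Jp y + s • Jm y) := by
      rw [← hξx]; simp [hy]
    have h1 : gamFl (Jp y) x = - gamFl y (Jp x) := by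
      have := hJp_compat y (Jp x)
      rw [hJp2, map_neg] at this
      linarith
    have h2 : gamFl (Jm y) x = - gamFl y (Jm x) := by
      have := hJm_compat y (Jm x)
      rw [hJm2, map_neg] at this
      linarith
    have hz1 : gamFl (Jp y) x = 0 := by
      rw [h1, hyV (Jp x) (hJpV x hxV), neg_zero]
    have hz2 : gamFl (Jm y) x = 0 := by
      rw [h2, hyV (Jm x) (hJmV x hxV), neg_zero]
    have hxx : gamFl x x = 0 := by
      nth_rewrite 1 [hxeq]
      simp [hz1, hz2]
    by_contra hne
    exact absurd hxx (ne_of_gt (hgam_pos x hne))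
  constructor
  · rw [Submodule.eq_bot_iff]
    intro x hx
    have hdiff : (Jp - Jm) = Jp + (-1 : ℝ) • Jm := by
      ext w; simp [sub_eq_add_neg]
    exact key (-1) x hx.1 (by rw [← hdiff]; exact hx.2)
  · rw [Submodule.eq_bot_iff]
    intro x hx
    have hsum : (Jp + Jm) = Jp + (1 : ℝ) • Jm := by
      ext w; simp
    exact key 1 x hx.1 (by rw [← hsum]; exact hx.2)
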